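/- Let P ≥ 1 and let T₁, …, T_P be binary computation trees. Then the maximum number of steals from the multiset {T₁, …, T_P} equals the maximum, over all permutations σ of {1, …, P}, of ∑_{i=1}^{P} Φ(T_{σ(i)}, i−1); that is, steals({T₁, …, T_P}) = max_{σ ∈ S_P} ( Φ(T_{σ(1)}, 0) + Φ(T_{σ(2)}, 1) + ⋯ + Φ(T_{σ(P)}, P−1) ). -/

import Mathlib

/-- A binary computation tree: a single node, or a root with two subtrees. -/
inductive BTree : Type
  | triv : BTree
  | node : BTree → BTree → BTree
  deriving DecidableEq

/-- A steal step on a multiset of binary computation trees: choose an arbitrary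
tree `U` and a tree `node l r` from the multiset, and replace them by `l` and `r`. -/
def StealStep (S S' : Multiset BTree) : Prop :=
  ∃ (U l r : BTree) (S₀ : Multiset BTree),
    S = U ::ₘ BTree.node l r ::ₘ S₀ ∧ S' = l ::ₘ r ::ₘ S₀

/-- `StealSeq n S` means there exists a sequence of `n` steal steps starting from `S`. -/
def StealSeq : ℕ → Multiset BTree → Prop
  | 0, _ => True
  | n + 1, S => ∃ S', StealStep S S' ∧ StealSeq n S'

/-- The maximum length of a sequence of steal steps starting from `S`. -/
noncomputable def steals (S : Multiset BTree) : ℕ :=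
  sSup {n | StealSeq n S}

/-- The `n`-th potential of `T`: the maximum number of steals starting from a
configuration with one processor owning `T` and `n` processors with trivial trees. -/
noncomputable def Phi (T : BTree) (n : ℕ) : ℕ :=
  steals (T ::ₘ Multiset.replicate n BTree.triv)

/-!
Lower bound: activate the processors one at a time in the order `σ`. The `i`-th processor plays
an optimal game on its tree with the `i - 1` processors activated before it as helpers. These no
longer hold trivial trees, but that only helps, since a thief's own tree plays no role.

Upper bound, by induction on a steal sequence: if its first steal is by `U` from `node l r`, take
an ordering that is good for the remaining configuration, put `U` in front and replace the later
of `l`, `r` by `node l r` (dropping the earlier one). This pays for the steal because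
`Φ(l, m) + Φ(r, m + 1) < Φ(node l r, m + 1)`, which is the lower bound applied after the first
steal from `node l r`, and because `Φ` is monotone in the number of helpers.
-/

def BTree.size : BTree → ℕ
  | .triv => 1
  | .node l r => l.size + r.size + 1

lemma BTree.one_le_size (T : BTree) : 1 ≤ T.size := by
  cases T <;> simp [BTree.size]

lemma StealStep.sum_size_lt {S S' : Multiset BTree} (h : StealStep S S') :
    (S'.map BTree.size).sum < (S.map BTree.size).sum := by
  obtain ⟨U, l, r, S₀, rfl, rfl⟩ := h
  simp only [Multiset.map_cons, Multiset.sum_cons, BTree.size]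
  have := U.one_le_size
  omega

lemma StealSeq.le_sum_size : ∀ {n : ℕ} {S : Multiset BTree},
    StealSeq n S → n ≤ (S.map BTree.size).sum
  | 0, _, _ => Nat.zero_le _
  | _ + 1, _, ⟨_, hstep, hseq⟩ => (Nat.succ_le_succ hseq.le_sum_size).trans hstep.sum_size_lt

lemma bddAbove_setOf_stealSeq (S : Multiset BTree) : BddAbove {n | StealSeq n S} :=
  ⟨_, fun _ => StealSeq.le_sum_size⟩

lemma stealSeq_steals (S : Multiset BTree) : StealSeq (steals S) S :=
  Nat.sSup_mem ⟨0, show StealSeq 0 S from trivial⟩ (bddAbove_setOf_stealSeq S)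

lemma StealSeq.le_steals {n : ℕ} {S : Multiset BTree} (h : StealSeq n S) : n ≤ steals S :=
  le_csSup (bddAbove_setOf_stealSeq S) h

lemma StealStep.steals_lt {S S' : Multiset BTree} (h : StealStep S S') : steals S' < steals S :=
  StealSeq.le_steals (n := steals S' + 1) ⟨S', h, stealSeq_steals S'⟩

inductive StealPath : ℕ → Multiset BTree → Multiset BTree → Prop
  | refl (S : Multiset BTree) : StealPath 0 S S
  | step {n : ℕ} {S S' E : Multiset BTree} :
      StealStep S S' → StealPath n S' E → StealPath (n + 1) S E

lemma StealSeq.exists_stealPath : ∀ {n : ℕ} {S : Multiset BTree},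
    StealSeq n S → ∃ E, StealPath n S E
  | 0, S, _ => ⟨S, .refl S⟩
  | _ + 1, _, ⟨_, hstep, hseq⟩ =>
    let ⟨E, hE⟩ := hseq.exists_stealPath
    ⟨E, .step hstep hE⟩

lemma StealPath.stealSeq_add {m : ℕ} {S E : Multiset BTree} (h : StealPath m S E) {n : ℕ}
    (hE : StealSeq n E) : StealSeq (n + m) S := by
  induction h with
  | refl => exact hE
  | step hstep _ ih => exact ⟨_, hstep, ih hE⟩

lemma StealPath.add_steals_le {n : ℕ} {S E : Multiset BTree} (h : StealPath n S E) :
    n + steals E ≤ steals S :=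
  (add_comm n _).trans_le (h.stealSeq_add (stealSeq_steals E)).le_steals

lemma StealStep.add_left {S S' : Multiset BTree} (h : StealStep S S') (W : Multiset BTree) :
    StealStep (W + S) (W + S') := by
  obtain ⟨U, l, r, S₀, rfl, rfl⟩ := h
  exact ⟨U, l, r, W + S₀, by simp only [Multiset.add_cons], by simp only [Multiset.add_cons]⟩

lemma StealPath.add_left {n : ℕ} {S E : Multiset BTree} (h : StealPath n S E)
    (W : Multiset BTree) : StealPath n (W + S) (W + E) := by
  induction h with
  | refl => exact .refl _
  | step hstep _ ih => exact .step (hstep.add_left W) ih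

lemma StealPath.card_eq {n : ℕ} {S E : Multiset BTree} (h : StealPath n S E) :
    Multiset.card E = Multiset.card S := by
  induction h with
  | refl => rfl
  | step hstep _ ih =>
    obtain ⟨U, l, r, S₀, rfl, rfl⟩ := hstep
    simpa using ih

lemma steals_le_steals_add (S W : Multiset BTree) : steals S ≤ steals (W + S) := by
  obtain ⟨E, hE⟩ := (stealSeq_steals S).exists_stealPath
  exact (Nat.le_add_right _ _).trans (hE.add_left W).add_steals_le

lemma monotone_Phi (T : BTree) : Monotone (Phi T) := by
  refine monotone_nat_of_le_succ fun n => ?_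
  rw [Phi, Phi, Multiset.replicate_succ, Multiset.cons_swap, ← Multiset.singleton_add BTree.triv]
  exact steals_le_steals_add _ _

/-- `Dominates a b`: a processor holding `a` can play every role a processor holding `b` can,
since a thief's own tree is irrelevant and only `node` trees can be stolen from. -/
def Dominates (a b : BTree) : Prop := b = .triv ∨ a = b

lemma StealSeq.of_rel_dominates : ∀ {n : ℕ} {S S' : Multiset BTree},
    StealSeq n S → Multiset.Rel Dominates S' S → StealSeq n S'
  | 0, _, _, _, _ => trivial
  | _ + 1, _, _, ⟨_, ⟨_, l, r, _, rfl, rfl⟩, hseq⟩, hrel => by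
    obtain ⟨a, _, -, hrel', rfl⟩ := Multiset.rel_cons_right.mp hrel
    obtain ⟨c, S₀', hc, hrel₀, rfl⟩ := Multiset.rel_cons_right.mp hrel'
    obtain rfl : c = .node l r := hc.resolve_left BTree.noConfusion
    exact ⟨_, ⟨a, l, r, S₀', rfl, rfl⟩,
      hseq.of_rel_dominates ((hrel₀.cons (.inr rfl)).cons (.inr rfl))⟩

lemma steals_add_replicate_le (W E : Multiset BTree) :
    steals (W + .replicate (Multiset.card E) .triv) ≤ steals (W + E) :=
  StealSeq.le_steals <| (stealSeq_steals _).of_rel_dominates <|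
    (Multiset.rel_refl_of_refl_on fun _ _ => .inr rfl).add
      (Multiset.rel_replicate_right.mpr ⟨rfl, fun _ _ => .inl rfl⟩)

/-- The `m + 1` trees left behind by an optimal game on `T` with `m` idle helpers are at least
as good as `m + 1` idle processors for the rest `W`. -/
lemma Phi_add_steals_le (T : BTree) (m : ℕ) (W : Multiset BTree) :
    Phi T m + steals (W + .replicate (m + 1) .triv) ≤
      steals (W + T ::ₘ .replicate m .triv) := by
  obtain ⟨E, hE⟩ := (stealSeq_steals (T ::ₘ .replicate m .triv)).exists_stealPath
  have hcard : Multiset.card E = m + 1 := by simp [hE.card_eq]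
  calc Phi T m + steals (W + .replicate (m + 1) .triv)
      ≤ Phi T m + steals (W + E) := by
        rw [← hcard]; exact Nat.add_le_add_left (steals_add_replicate_le W E) _
    _ ≤ _ := (hE.add_left W).add_steals_le

noncomputable def orderedPotential : ℕ → List BTree → ℕ
  | _, [] => 0
  | k, T :: L => Phi T k + orderedPotential (k + 1) L

lemma orderedPotential_le_steals :
    ∀ (L : List BTree) (m : ℕ), orderedPotential m L ≤ steals (↑L + .replicate m .triv)
  | [], _ => Nat.zero_le _
  | T :: L, m => by
    have h := Phi_add_steals_le T m L
    rw [Multiset.add_cons] at h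
    rw [orderedPotential, ← Multiset.cons_coe, Multiset.cons_add]
    exact (Nat.add_le_add_left (orderedPotential_le_steals L (m + 1)) _).trans h

lemma Phi_add_Phi_lt_Phi_node {x y l r : BTree} (hxy : ({x, y} : Multiset BTree) = {l, r})
    (m : ℕ) : Phi x m + Phi y (m + 1) < Phi (.node l r) (m + 1) := by
  have hstep : StealStep (.node l r ::ₘ .replicate (m + 1) .triv)
      (l ::ₘ r ::ₘ .replicate m .triv) :=
    ⟨.triv, l, r, _, by rw [Multiset.replicate_succ, Multiset.cons_swap], rfl⟩
  have hpair : ((([x, y] : List BTree) : Multiset BTree) + .replicate m .triv) =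
      l ::ₘ r ::ₘ .replicate m .triv := by
    simp only [← Multiset.cons_coe, Multiset.coe_nil, Multiset.cons_add, zero_add]
    simpa using congrArg (· + Multiset.replicate m BTree.triv) hxy
  calc Phi x m + Phi y (m + 1) = orderedPotential m [x, y] := rfl
    _ ≤ steals (l ::ₘ r ::ₘ .replicate m .triv) := hpair ▸ orderedPotential_le_steals _ _
    _ < _ := hstep.steals_lt

lemma orderedPotential_append (k : ℕ) (L L' : List BTree) :
    orderedPotential k (L ++ L') = orderedPotential k L + orderedPotential (k + L.length) L' := by
  induction L generalizing k with
  | nil => simp [orderedPotential]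
  | cons T L ih =>
    simp only [List.cons_append, orderedPotential, ih, List.length_cons]
    rw [Nat.add_assoc k 1, Nat.add_comm 1 L.length]
    omega

lemma orderedPotential_mono (L : List BTree) : Monotone (orderedPotential · L) := by
  induction L with
  | nil => exact monotone_const
  | cons T L ih => exact fun k k' h => Nat.add_le_add (monotone_Phi T h) (ih (Nat.succ_le_succ h))

lemma orderedPotential_lt_merge {x y N : BTree}
    (hN : ∀ m, Phi x m + Phi y (m + 1) < Phi N (m + 1)) (U : BTree) (A B C : List BTree) :
    orderedPotential 0 (A ++ x :: B ++ y :: C) < orderedPotential 0 (U :: (A ++ B ++ N :: C)) := by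
  have hA := orderedPotential_mono A (zero_le_one' ℕ)
  have hx := monotone_Phi x (Nat.le_add_right A.length B.length)
  have hxy := hN (A.length + B.length)
  simp only [orderedPotential, orderedPotential_append, List.length_append, List.length_cons]
    at hA hx hxy ⊢
  ring_nf at hA hx hxy ⊢
  omega

lemma List.exists_eq_append_cons_append_cons {α : Type*} {L : List α} {a b : α}
    {S : Multiset α} (h : (L : Multiset α) = a ::ₘ b ::ₘ S) :
    ∃ (A B C : List α) (x y : α), L = A ++ x :: B ++ y :: C ∧
      ({x, y} : Multiset α) = {a, b} ∧ ((A ++ B ++ C : List α) : Multiset α) = S := by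
  have hmid {A D : List α} {x : α} :
      ((A ++ x :: D : List α) : Multiset α) = x ::ₘ ↑(A ++ D) :=
    Multiset.coe_eq_coe.mpr List.perm_middle
  obtain ⟨A, D, rfl⟩ :=
    List.append_of_mem (Multiset.mem_coe.mp (h ▸ Multiset.mem_cons_self a _))
  rw [hmid, Multiset.cons_inj_right] at h
  rcases List.mem_append.mp (Multiset.mem_coe.mp (h ▸ Multiset.mem_cons_self b S)) with hb | hb
  · obtain ⟨A₁, A₂, rfl⟩ := List.append_of_mem hb
    refine ⟨A₁, A₂, D, b, a, by simp, Multiset.pair_comm b a, ?_⟩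
    rwa [List.append_assoc, List.cons_append, hmid, Multiset.cons_inj_right,
      ← List.append_assoc] at h
  · obtain ⟨B, C, rfl⟩ := List.append_of_mem hb
    refine ⟨A, B, C, a, b, by simp, rfl, ?_⟩
    rwa [← List.append_assoc, hmid, Multiset.cons_inj_right] at h

lemma StealSeq.exists_le_orderedPotential : ∀ {n : ℕ} {S : Multiset BTree},
    StealSeq n S → ∃ L : List BTree, (L : Multiset BTree) = S ∧ n ≤ orderedPotential 0 L
  | 0, S, _ => ⟨S.toList, S.coe_toList, Nat.zero_le _⟩
  | _ + 1, _, ⟨_, ⟨U, l, r, S₀, rfl, rfl⟩, hseq⟩ => by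
    obtain ⟨L', hL', hn⟩ := hseq.exists_le_orderedPotential
    obtain ⟨A, B, C, x, y, rfl, hxy, hABC⟩ := List.exists_eq_append_cons_append_cons hL'
    refine ⟨U :: (A ++ B ++ .node l r :: C), ?_,
      hn.trans_lt (orderedPotential_lt_merge (Phi_add_Phi_lt_Phi_node hxy) U A B C)⟩
    rw [← hABC, ← Multiset.cons_coe, Multiset.coe_eq_coe.mpr List.perm_middle]
    rfl

lemma List.Perm.exists_perm_eq_ofFn_comp {α : Type*} {n : ℕ} {f : Fin n → α} {L : List α}
    (h : L.Perm (List.ofFn f)) : ∃ σ : Equiv.Perm (Fin n), L = List.ofFn (f ∘ σ) := by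
  rw [List.ofFn_eq_map] at h
  obtain ⟨l, rfl, hl⟩ := (congrFun₂ (List.eq_map_comp_perm f) L _).mpr h
  have hlen : l.length = n := by simpa using hl.length_eq
  let e := (hl.nodup_iff.mpr (List.nodup_finRange n)).getEquivOfForallMemList l
    fun i => hl.mem_iff.mpr (List.mem_finRange i)
  refine ⟨(finCongr hlen.symm).trans e, ?_⟩
  rw [← List.map_ofFn]
  congr 1
  exact List.ext_get (by simp [hlen]) fun _ _ _ => by simp [e]

lemma orderedPotential_ofFn {n : ℕ} (g : Fin n → BTree) (k : ℕ) :
    orderedPotential k (List.ofFn g) = ∑ i : Fin n, Phi (g i) (k + i) := by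
  induction n generalizing k with
  | zero => rfl
  | succ n ih =>
    rw [List.ofFn_succ, orderedPotential, ih, Fin.sum_univ_succ]
    simp only [Fin.val_zero, Fin.val_succ, add_zero, Nat.add_right_comm k, add_assoc]

theorem steals_eq_max_over_perms_general (P : ℕ) (T : Fin P → BTree) :
    steals (Multiset.map T Finset.univ.val) =
      Finset.univ.sup' Finset.univ_nonempty
        (fun σ : Equiv.Perm (Fin P) => ∑ i : Fin P, Phi (T (σ i)) i.val) := by
  have hsum (σ : Equiv.Perm (Fin P)) :
      orderedPotential 0 (List.ofFn (T ∘ σ)) = ∑ i : Fin P, Phi (T (σ i)) i.val := by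
    simp only [orderedPotential_ofFn, Function.comp_apply, zero_add]
  rw [Fin.univ_val_map]
  refine le_antisymm ?_ (Finset.sup'_le _ _ fun σ _ => ?_)
  · obtain ⟨L, hL, hle⟩ := (stealSeq_steals _).exists_le_orderedPotential
    obtain ⟨σ, rfl⟩ := (Multiset.coe_eq_coe.mp hL).exists_perm_eq_ofFn_comp
    exact (hsum σ ▸ hle).trans <| Finset.le_sup'
      (fun τ : Equiv.Perm (Fin P) => ∑ i : Fin P, Phi (T (τ i)) i.val) (Finset.mem_univ σ)
  · rw [← hsum, ← Multiset.coe_eq_coe.mpr (σ.ofFn_comp_perm T)]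
    simpa using orderedPotential_le_steals (List.ofFn (T ∘ σ)) 0

theorem steals_eq_max_over_perms (P : ℕ) (hP : 1 ≤ P) (T : Fin P → BTree) :
    steals (Multiset.map T Finset.univ.val) =
      Finset.univ.sup' Finset.univ_nonempty
        (fun σ : Equiv.Perm (Fin P) => ∑ i : Fin P, Phi (T (σ i)) i.val) :=
  steals_eq_max_over_perms_general P T
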